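/- Let 2 ≤ ℓ ≤ n. The probability that a uniformly random permutation σ ∈ S_n has at least two cycles of the same length j for some j ≥ ℓ (i.e., C_j(σ) ≥ 2 for some j with ℓ ≤ j ≤ n) is at most 1 / (2(ℓ − 1)). -/

import Mathlib

open Finset

/-- The number of cycles of length `j` in the permutation `σ` of `{1,…,n}`
(fixed points count as cycles of length 1): the number of points whose
orbit under `σ` has size `j`, divided by `j`. -/
noncomputable def cycleCount {n : ℕ} (σ : Equiv.Perm (Fin n)) (j : ℕ) : ℕ :=
  (Finset.univ.filter fun x => Function.minimalPeriod (⇑σ) x = j).card / j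

/-- The number of cycles of `σ` whose length lies in the set `I`. -/
noncomputable def cycleCountIn {n : ℕ} (σ : Equiv.Perm (Fin n)) (I : Finset ℕ) : ℕ :=
  ∑ j ∈ I, cycleCount σ j

/-- The total number of cycles of `σ` (fixed points included as 1-cycles). -/
noncomputable def totalCycles {n : ℕ} (σ : Equiv.Perm (Fin n)) : ℕ :=
  cycleCountIn σ (Finset.Icc 1 n)

/-- Probability of an event under a uniformly random permutation of `{1,…,n}`. -/
noncomputable def permP (n : ℕ) (E : Equiv.Perm (Fin n) → Prop) : ℝ :=
  (Nat.card {σ : Equiv.Perm (Fin n) // E σ} : ℝ) / n.factorial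

/-- Expectation of `f` under a uniformly random permutation of `{1,…,n}`. -/
noncomputable def permE (n : ℕ) (f : Equiv.Perm (Fin n) → ℝ) : ℝ :=
  (∑ σ : Equiv.Perm (Fin n), f σ) / n.factorial

/-- `H(I) = ∑_{j ∈ I} 1/j`. -/
noncomputable def Hset (I : Finset ℕ) : ℝ := ∑ j ∈ I, (1 : ℝ) / j

/-- The harmonic sum `H_n = ∑_{i=1}^n 1/i`. -/
noncomputable def harm (n : ℕ) : ℝ := Hset (Finset.Icc 1 n)

/-! If `σ` has two cycles of length `j`, there are at least `2j · j` ordered pairs `(x, y)` of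
points on distinct `j`-cycles. Multiplying by `swap x y` merges the two cycles into a `2j`-cycle
through `x`, and `y` is the `j`-th iterate of `x` under the product, so `(σ, x, y) ↦ (x, σ * swap x y)`
is injective. Since at most `(n-1)!` permutations put a given point on a cycle of a given length,
`2j² · #{σ | C_j(σ) ≥ 2} ≤ n!`. Summing `1/(2j²) ≤ (1/(j-1) - 1/j)/2` over `j ≥ ℓ` telescopes to
`1/(2(ℓ-1))`. -/

open Function
open scoped Nat

theorem Nat.mul_factorial_pred_le (k : ℕ) : k * (k - 1)! ≤ k ! := by
  cases k <;> simp [Nat.factorial_succ]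

theorem sum_Icc_one_div_sq_le {ℓ : ℕ} (hℓ : 2 ≤ ℓ) (N : ℕ) :
    ∑ j ∈ Icc ℓ N, 1 / (j : ℝ) ^ 2 ≤ 1 / ((ℓ : ℝ) - 1) := by
  have hℓ' : (1 : ℝ) < ℓ := by exact_mod_cast hℓ
  rcases lt_or_ge N ℓ with hN | hN
  · rw [Icc_eq_empty (by omega), sum_empty]
    exact one_div_nonneg.2 (by linarith)
  let f : ℕ → ℝ := fun i => -(1 / ((i : ℝ) - 1))
  calc ∑ j ∈ Icc ℓ N, 1 / (j : ℝ) ^ 2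
      ≤ ∑ j ∈ Icc ℓ N, (f (j + 1) - f j) := sum_le_sum fun j hj => by
        have hj : (1 : ℝ) < j := by exact_mod_cast (mem_Icc.1 hj).1.trans_lt' hℓ
        have hj₀ : (0 : ℝ) < j - 1 := by linarith
        have : 1 / (j : ℝ) ^ 2 ≤ 1 / ((j : ℝ) - 1) - 1 / j := by
          rw [div_sub_div _ _ hj₀.ne' (by positivity),
            div_le_div_iff₀ (by positivity) (by positivity)]
          nlinarith
        simpa [f, sub_eq_add_neg, add_comm] using this
    _ = f (N + 1) - f ℓ := sum_Icc_sub hN f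
    _ ≤ 1 / ((ℓ : ℝ) - 1) := by
        simp only [f, Nat.cast_add, Nat.cast_one, add_sub_cancel_right, sub_neg_eq_add]
        have : 0 ≤ 1 / (N : ℝ) := by positivity
        linarith

namespace Equiv.Perm

variable {α : Type*}

theorem minimalPeriod_pos [Finite α] (σ : Perm α) (x : α) : 0 < minimalPeriod σ x :=
  MulAction.period_pos_of_orderOf_pos (orderOf_pos σ) x

theorem iterate_ne_of_not_sameCycle {σ : Perm α} {x y : α} (h : ¬σ.SameCycle x y) (k : ℕ) :
    σ^[k] x ≠ y := fun hk => h ⟨k, by simpa [iterate_eq_pow] using hk⟩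

section MulSwap

variable [DecidableEq α] {σ : Perm α} {x y : α}

theorem iterate_mul_swap_apply_left (h : ¬σ.SameCycle x y) {k : ℕ} (hk₀ : 0 < k)
    (hk : k ≤ minimalPeriod σ y) : (σ * swap x y)^[k] x = σ^[k] y := by
  induction k, hk₀ using Nat.le_induction with
  | base => simp
  | succ k hk₁ ih =>
    have hne_x : σ^[k] y ≠ x := iterate_ne_of_not_sameCycle (fun h' => h h'.symm) k
    have hne_y : σ^[k] y ≠ y := fun hfix =>
      absurd (IsPeriodicPt.eq_zero_of_lt_minimalPeriod hfix (by omega)) (by omega)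
    rw [iterate_succ_apply', ih (by omega), iterate_succ_apply', mul_apply,
      swap_apply_of_ne_of_ne hne_x hne_y]

variable [Finite α]

theorem iterate_minimalPeriod_mul_swap_apply_left (h : ¬σ.SameCycle x y) :
    (σ * swap x y)^[minimalPeriod σ y] x = y := by
  rw [iterate_mul_swap_apply_left h (minimalPeriod_pos σ y) le_rfl, iterate_minimalPeriod]

theorem minimalPeriod_mul_swap (h : ¬σ.SameCycle x y) :
    minimalPeriod (σ * swap x y) x = minimalPeriod σ x + minimalPeriod σ y := by
  set τ := σ * swap x y
  have h' : ¬σ.SameCycle y x := fun h' => h h'.symm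
  have second_half : ∀ k, 0 < k → k ≤ minimalPeriod σ x →
      τ^[k + minimalPeriod σ y] x = σ^[k] x := fun k hk₀ hk => by
    rw [iterate_add_apply, iterate_minimalPeriod_mul_swap_apply_left h, show τ = σ * swap y x by
      rw [swap_comm], iterate_mul_swap_apply_left h' hk₀ hk]
  have hx₀ := minimalPeriod_pos σ x
  refine le_antisymm (IsPeriodicPt.minimalPeriod_le (by omega) ?_) ?_
  · rw [IsPeriodicPt, IsFixedPt, second_half _ hx₀ le_rfl, iterate_minimalPeriod]
  · by_contra! hlt
    have hfix : τ^[minimalPeriod τ x] x = x := iterate_minimalPeriod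
    rcases le_or_gt (minimalPeriod τ x) (minimalPeriod σ y) with hle | hgt
    · exact iterate_ne_of_not_sameCycle h' _
        (iterate_mul_swap_apply_left h (minimalPeriod_pos τ x) hle ▸ hfix)
    · obtain ⟨k, hk⟩ := Nat.exists_eq_add_of_lt hgt
      rw [show minimalPeriod τ x = (k + 1) + minimalPeriod σ y by omega,
        second_half _ k.succ_pos (by omega)] at hfix
      exact k.succ_ne_zero (IsPeriodicPt.eq_zero_of_lt_minimalPeriod hfix (by omega))

end MulSwap

variable [Fintype α] [DecidableEq α]

theorem card_fixing (F : Finset α) :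
    #{τ : Perm α | ∀ a ∈ F, τ a = a} = (Fintype.card α - #F)! := by
  calc #{τ : Perm α | ∀ a ∈ F, τ a = a}
      = Fintype.card {τ : Perm α // ∀ a, ¬a ∉ F → τ a = a} := by
        simp only [not_not, Fintype.card_subtype]
    _ = Fintype.card (Perm {a // a ∉ F}) :=
        (Fintype.card_congr (Equiv.Perm.subtypeEquivSubtypePerm _)).symm
    _ = (Fintype.card α - #F)! := by
        rw [Fintype.card_perm, Fintype.card_subtype_compl, Fintype.card_coe]

/-- Cutting `x` out of its cycle, `τ ↦ τ * swap x (τ⁻¹ x)`, turns a permutation in which `x` has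
period `m + 1` into one fixing `x` in which `τ⁻¹ x` has period `m`; hence induction on `m`. -/
theorem card_fixing_minimalPeriod_eq_le (m : ℕ) {F : Finset α} {x : α} (hx : x ∉ F) :
    #{τ : Perm α | (∀ a ∈ F, τ a = a) ∧ minimalPeriod τ x = m}
      ≤ (Fintype.card α - #F - 1)! := by
  induction m generalizing F x with
  | zero => simp [(minimalPeriod_pos _ x).ne']
  | succ m ih =>
    have hcard : #(insert x F) = #F + 1 := card_insert_of_notMem hx
    rcases m.eq_zero_or_pos with rfl | hm
    · calc _ ≤ #{τ : Perm α | ∀ a ∈ insert x F, τ a = a} := by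
            refine card_le_card fun τ hτ => ?_
            simp only [mem_filter, mem_univ, true_and, zero_add,
              minimalPeriod_eq_one_iff_isFixedPt, forall_mem_insert] at hτ ⊢
            exact ⟨hτ.2, hτ.1⟩
        _ = _ := by rw [card_fixing, hcard, Nat.sub_sub]
    set G := insert x F
    let D : Finset (Σ _ : α, Perm α) :=
      Gᶜ.sigma fun z => {τ : Perm α | (∀ a ∈ G, τ a = a) ∧ minimalPeriod τ z = m}
    have hcut : ({τ : Perm α | (∀ a ∈ F, τ a = a) ∧ minimalPeriod τ x = m + 1} : Finset _)
        ⊆ D.image fun p => p.2 * swap x p.1 := by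
      intro τ hτ
      simp only [mem_filter, mem_univ, true_and] at hτ
      obtain ⟨hfix, hper⟩ := hτ
      set z := τ⁻¹ x
      have hz : τ z = x := τ.apply_symm_apply x
      have hzx : z ≠ x := fun h => by
        rw [minimalPeriod_eq_one_iff_isFixedPt.2 (h ▸ hz : τ x = x)] at hper
        omega
      have hzF : z ∉ F := fun h => hx (by rwa [← hz, hfix z h])
      set τ' := τ * swap x z
      have hτ'x : τ' x = x := by simp [τ', hz]
      have hsplit : τ' * swap x z = τ := mul_swap_mul_self x z τ
      have hper' := minimalPeriod_mul_swap (σ := τ') fun h => hzx (h.eq_of_left hτ'x).symm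
      rw [hsplit, hper, minimalPeriod_eq_one_iff_isFixedPt.2 hτ'x] at hper'
      refine mem_image.2 ⟨⟨z, τ'⟩, mem_sigma.2 ⟨?_, ?_⟩, hsplit⟩
      · simpa [G, hzx] using hzF
      · simp only [mem_filter, mem_univ, true_and, forall_mem_insert, G]
        refine ⟨⟨hτ'x, fun a ha => ?_⟩, by omega⟩
        rw [mul_apply, swap_apply_of_ne_of_ne (ne_of_mem_of_not_mem ha hx)
          (ne_of_mem_of_not_mem ha hzF), hfix a ha]
    calc _ ≤ #(D.image fun p => p.2 * swap x p.1) := card_le_card hcut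
      _ ≤ #D := card_image_le
      _ = ∑ z ∈ Gᶜ, #{τ : Perm α | (∀ a ∈ G, τ a = a) ∧ minimalPeriod τ z = m} :=
        card_sigma _ _
      _ ≤ ∑ z ∈ Gᶜ, (Fintype.card α - #G - 1)! :=
        sum_le_sum fun z hz => ih (mem_compl.1 hz)
      _ = (Fintype.card α - #F - 1) * (Fintype.card α - #F - 1 - 1)! := by
        rw [sum_const, card_compl, hcard, smul_eq_mul]
        simp only [Nat.sub_sub]
      _ ≤ _ := Nat.mul_factorial_pred_le _

theorem card_pointed_minimalPeriod_eq_le (m : ℕ) :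
    #{p : α × Perm α | minimalPeriod p.2 p.1 = m} ≤ (Fintype.card α)! :=
  calc #{p : α × Perm α | minimalPeriod p.2 p.1 = m}
      = ∑ x : α, #{τ : Perm α | minimalPeriod τ x = m} := by
        simp only [card_filter, Fintype.sum_prod_type]
    _ ≤ ∑ _x : α, (Fintype.card α - 1)! := sum_le_sum fun x _ => by
        simpa using card_fixing_minimalPeriod_eq_le m (notMem_empty x)
    _ ≤ (Fintype.card α)! := by
        rw [sum_const, card_univ, smul_eq_mul]
        exact Nat.mul_factorial_pred_le _

theorem card_sameCycle_le (σ : Perm α) (x : α) :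
    #{y | σ.SameCycle x y} ≤ minimalPeriod σ x :=
  calc #{y | σ.SameCycle x y}
      ≤ #((range (minimalPeriod σ x)).image fun k => σ^[k] x) := card_le_card fun y hy => by
        obtain ⟨i, rfl⟩ := (mem_filter.1 hy).2.exists_nat_pow_eq
        refine mem_image.2 ⟨i % minimalPeriod σ x,
          mem_range.2 (Nat.mod_lt _ (minimalPeriod_pos σ x)), ?_⟩
        rw [iterate_mod_minimalPeriod_eq, iterate_eq_pow]
    _ ≤ minimalPeriod σ x := card_image_le.trans (card_range _).le

noncomputable def pointsOfPeriod (σ : Perm α) (j : ℕ) : Finset α := {x | minimalPeriod σ x = j}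

noncomputable def distinctCyclePairs (σ : Perm α) (j : ℕ) : Finset (α × α) :=
  {p ∈ pointsOfPeriod σ j ×ˢ pointsOfPeriod σ j | ¬σ.SameCycle p.1 p.2}

theorem mem_distinctCyclePairs {σ : Perm α} {j : ℕ} {p : α × α} :
    p ∈ distinctCyclePairs σ j ↔
      minimalPeriod σ p.1 = j ∧ minimalPeriod σ p.2 = j ∧ ¬σ.SameCycle p.1 p.2 := by
  simp [distinctCyclePairs, pointsOfPeriod, and_assoc]

theorem two_mul_sq_le_card_distinctCyclePairs {σ : Perm α} {j : ℕ}
    (h : 2 * j ≤ #(pointsOfPeriod σ j)) : 2 * j ^ 2 ≤ #(distinctCyclePairs σ j) := by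
  set P := pointsOfPeriod σ j
  have hfiber : ∀ x ∈ P, #P - j ≤ #{y ∈ P | ¬σ.SameCycle x y} := fun x hx => by
    have hsame : #{y ∈ P | σ.SameCycle x y} ≤ j :=
      (card_le_card (filter_subset_filter _ (subset_univ P))).trans
        ((card_sameCycle_le σ x).trans (mem_filter.1 hx).2.le)
    have hsplit : #{y ∈ P | σ.SameCycle x y} + #{y ∈ P | ¬σ.SameCycle x y} = #P :=
      card_filter_add_card_filter_not _
    omega
  calc 2 * j ^ 2 = 2 * j * j := by ring
    _ ≤ #P * (#P - j) := Nat.mul_le_mul h (by omega)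
    _ = ∑ _x ∈ P, (#P - j) := by rw [sum_const, smul_eq_mul]
    _ ≤ ∑ x ∈ P, #{y ∈ P | ¬σ.SameCycle x y} := sum_le_sum hfiber
    _ = #(distinctCyclePairs σ j) := by
        simp only [distinctCyclePairs, card_filter, sum_product, P]

/-- `(σ, x, y) ↦ (x, σ * swap x y)` is injective on these triples: `y` is recovered as the image
of `x` under the `j`-th iterate of the merged permutation. -/
theorem card_sigma_distinctCyclePairs_le (j : ℕ) :
    #(univ.sigma fun σ : Perm α => distinctCyclePairs σ j) ≤ (Fintype.card α)! := by
  refine le_trans (card_le_card_of_injOn (fun q => (q.2.1, q.1 * swap q.2.1 q.2.2))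
    (t := {p : α × Perm α | minimalPeriod p.2 p.1 = 2 * j}) ?_ ?_)
    (card_pointed_minimalPeriod_eq_le _)
  · rintro ⟨σ, x, y⟩ hq
    obtain ⟨hx, hy, hxy⟩ := mem_distinctCyclePairs.1 (mem_sigma.1 hq).2
    exact mem_filter.2 ⟨mem_univ _, by rw [minimalPeriod_mul_swap hxy, hx, hy, two_mul]⟩
  · rintro ⟨σ, x, y⟩ hq ⟨σ', x', y'⟩ hq' heq
    obtain ⟨-, hy, hxy⟩ : _ ∧ minimalPeriod σ y = j ∧ ¬σ.SameCycle x y :=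
      mem_distinctCyclePairs.1 (mem_sigma.1 hq).2
    obtain ⟨-, hy', hxy'⟩ : _ ∧ minimalPeriod σ' y' = j ∧ ¬σ'.SameCycle x' y' :=
      mem_distinctCyclePairs.1 (mem_sigma.1 hq').2
    obtain ⟨rfl, hτ⟩ : x = x' ∧ σ * swap x y = σ' * swap x' y' := Prod.mk.inj heq
    obtain rfl : y = y' := by
      rw [← iterate_minimalPeriod_mul_swap_apply_left hxy,
        ← iterate_minimalPeriod_mul_swap_apply_left hxy', hy, hy', hτ]
    rw [mul_right_cancel hτ]

theorem two_mul_sq_mul_card_le (j : ℕ) :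
    2 * j ^ 2 * #{σ : Perm α | 2 * j ≤ #(pointsOfPeriod σ j)} ≤ (Fintype.card α)! :=
  calc 2 * j ^ 2 * #{σ : Perm α | 2 * j ≤ #(pointsOfPeriod σ j)}
      = ∑ _σ ∈ {σ : Perm α | 2 * j ≤ #(pointsOfPeriod σ j)}, 2 * j ^ 2 := by
        rw [sum_const, smul_eq_mul, mul_comm]
    _ ≤ ∑ σ ∈ {σ : Perm α | 2 * j ≤ #(pointsOfPeriod σ j)}, #(distinctCyclePairs σ j) :=
        sum_le_sum fun σ hσ => two_mul_sq_le_card_distinctCyclePairs (mem_filter.1 hσ).2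
    _ ≤ ∑ σ, #(distinctCyclePairs σ j) := sum_le_sum_of_subset (subset_univ _)
    _ = #(univ.sigma fun σ : Perm α => distinctCyclePairs σ j) := (card_sigma _ _).symm
    _ ≤ (Fintype.card α)! := card_sigma_distinctCyclePairs_le j

end Equiv.Perm

theorem permP_eq_card_filter_div (n : ℕ) (E : Equiv.Perm (Fin n) → Prop) [DecidablePred E] :
    permP n E = #{σ | E σ} / n ! := by
  rw [permP, Nat.card_eq_fintype_card, Fintype.card_subtype]

theorem permP_exists_le_sum {n : ℕ} {ι : Type*} (I : Finset ι)
    (E : ι → Equiv.Perm (Fin n) → Prop) :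
    permP n (fun σ => ∃ i ∈ I, E i σ) ≤ ∑ i ∈ I, permP n (E i) := by
  classical
  simp only [permP_eq_card_filter_div, ← sum_div]
  gcongr
  calc (#{σ | ∃ i ∈ I, E i σ} : ℝ) ≤ #(I.biUnion fun i => {σ | E i σ}) := by
        exact_mod_cast card_le_card fun σ hσ => by simpa using hσ
    _ ≤ ∑ i ∈ I, (#{σ | E i σ} : ℝ) := by exact_mod_cast card_biUnion_le

theorem permP_two_le_cycleCount_le {n j : ℕ} (hj : 0 < j) :
    permP n (fun σ => 2 ≤ cycleCount σ j) ≤ 1 / (2 * (j : ℝ) ^ 2) := by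
  have hcount := Equiv.Perm.two_mul_sq_mul_card_le (α := Fin n) j
  have hfilter : #{σ : Equiv.Perm (Fin n) | 2 ≤ cycleCount σ j}
      = #{σ : Equiv.Perm (Fin n) | 2 * j ≤ #(σ.pointsOfPeriod j)} := congrArg card <|
    filter_congr fun σ _ => Nat.le_div_iff_mul_le hj
  rw [Fintype.card_fin, ← hfilter] at hcount
  rw [permP_eq_card_filter_div, div_le_div_iff₀ (by positivity) (by positivity)]
  exact_mod_cast (by linarith : #{σ | 2 ≤ cycleCount σ j} * (2 * j ^ 2) ≤ 1 * n !)

theorem two_equal_large_cycles_general (n ℓ : ℕ) (h2 : 2 ≤ ℓ) :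
    permP n (fun σ => ∃ j ∈ Finset.Icc ℓ n, 2 ≤ cycleCount σ j)
      ≤ 1 / (2 * ((ℓ : ℝ) - 1)) :=
  calc _ ≤ ∑ j ∈ Icc ℓ n, permP n (fun σ => 2 ≤ cycleCount σ j) := permP_exists_le_sum _ _
    _ ≤ ∑ j ∈ Icc ℓ n, 1 / (2 * (j : ℝ) ^ 2) := sum_le_sum fun j hj =>
        permP_two_le_cycleCount_le ((mem_Icc.1 hj).1.trans_lt' (by omega))
    _ = (∑ j ∈ Icc ℓ n, 1 / (j : ℝ) ^ 2) / 2 := by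
        rw [sum_div]
        exact sum_congr rfl fun j _ => by ring
    _ ≤ 1 / ((ℓ : ℝ) - 1) / 2 := by gcongr; exact sum_Icc_one_div_sq_le h2 n
    _ = 1 / (2 * ((ℓ : ℝ) - 1)) := by rw [div_div, mul_comm]

/-- The probability that a random `σ ∈ Sₙ` has two cycles of the same length `j`
for some `j ≥ ℓ` is at most `1/(2(ℓ-1))`, for `2 ≤ ℓ ≤ n`. -/
theorem two_equal_large_cycles (n ℓ : ℕ) (h2 : 2 ≤ ℓ) (hn : ℓ ≤ n) :
    permP n (fun σ => ∃ j ∈ Finset.Icc ℓ n, 2 ≤ cycleCount σ j)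
      ≤ 1 / (2 * ((ℓ : ℝ) - 1)) :=
  two_equal_large_cycles_general n ℓ h2
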